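/- (Elimination of the outer replicas at an eigenvalue.) Let ξ ∈ ℂ, m, ε ∈ ℝ, write B := B_m, and let Ĥ₁(ξ) be the 6×6 matrix with 2×2 blocks indexed by k, k' ∈ {1, 0, −1}: diagonal blocks k·I₂ + ξ·σ, blocks (k, k−1) equal to εB, blocks (k, k+1) equal to εB*, other blocks zero. Suppose ψ = (ψ₁, ψ₀, ψ₋₁) ∈ ℂ² × ℂ² × ℂ² satisfies Ĥ₁(ξ)ψ = Eψ for some E ∈ ℂ with (1−E)² ≠ |ξ|² and (1+E)² ≠ |ξ|². Then ψ₁ = −ε·((1−E)·I₂ + ξ·σ)⁻¹·B·ψ₀, ψ₋₁ = −ε·((−1−E)·I₂ + ξ·σ)⁻¹·B*·ψ₀, and (ξ·σ − E·I₂ − ε²·(B*·((1−E)·I₂ + ξ·σ)⁻¹·B + B·((−1−E)·I₂ + ξ·σ)⁻¹·B*))·ψ₀ = 0. In particular, if ψ ≠ 0 then ψ₀ ≠ 0. -/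

import Mathlib

open Matrix Complex
open scoped Kronecker

noncomputable section

def σ1 : Matrix (Fin 2) (Fin 2) ℂ := !![0, 1; 1, 0]
def σ2 : Matrix (Fin 2) (Fin 2) ℂ := !![0, -Complex.I; Complex.I, 0]
def σ3 : Matrix (Fin 2) (Fin 2) ℂ := !![1, 0; 0, -1]

/-- `ξ·σ = ξ₁σ₁ + ξ₂σ₂ = !![0, conj ξ; ξ, 0]`. -/
def xiSigma (ξ : ℂ) : Matrix (Fin 2) (Fin 2) ℂ := !![0, (starRingEnd ℂ) ξ; ξ, 0]

def Bm (m : ℝ) : Matrix (Fin 2) (Fin 2) ℂ :=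
  (((1 + m) / 2 : ℝ) : ℂ) • !![0, 1; 0, 0] + (((1 - m) / 2 : ℝ) : ℂ) • !![0, 0; 1, 0]

/-- The 2×2 block of the bulk replica Hamiltonian at block position `(k, k')`. -/
def replicaBlock (ξ : ℂ) (m ε : ℝ) (k k' : ℤ) : Matrix (Fin 2) (Fin 2) ℂ :=
  if k' = k then (k : ℂ) • (1 : Matrix (Fin 2) (Fin 2) ℂ) + xiSigma ξ
  else if k' = k - 1 then (ε : ℂ) • Bm m
  else if k' = k + 1 then (ε : ℂ) • (Bm m)ᴴ
  else 0

/-- The bulk replica Hamiltonian `Ĥ_n(ξ)`, block tridiagonal with blocks indexed by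
`k, k' ∈ {-n, …, n}` (here realized by `Fin (2n+1)` via `k = j - n`). -/
def Hrep (n : ℕ) (ξ : ℂ) (m ε : ℝ) :
    Matrix (Fin (2 * n + 1) × Fin 2) (Fin (2 * n + 1) × Fin 2) ℂ :=
  fun p q => replicaBlock ξ m ε ((p.1 : ℤ) - n) ((q.1 : ℤ) - n) p.2 q.2

/-! The eigenvalue equation splits into three `2×2` block rows. The outer rows say
`((±1 - E) + ξ·σ) ψ_{±1} = -ε B ψ₀` (with `B*` for `-1`), and since `det (a + ξ·σ) = a² - |ξ|²`
the hypotheses make these blocks invertible; substituting the solved outer components into the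
central row gives the Schur-complement equation for `ψ₀`. In particular `ψ₀ = 0` forces `ψ = 0`. -/

lemma det_smul_one_add_xiSigma (ξ a : ℂ) :
    (a • (1 : Matrix (Fin 2) (Fin 2) ℂ) + xiSigma ξ).det = a ^ 2 - (‖ξ‖ : ℂ) ^ 2 := by
  have h : a • (1 : Matrix (Fin 2) (Fin 2) ℂ) + xiSigma ξ = !![a, starRingEnd ℂ ξ; ξ, a] := by
    ext i j; fin_cases i <;> fin_cases j <;> simp [xiSigma]
  rw [h, det_fin_two_of, ← ofReal_pow, Complex.sq_norm, ← mul_conj]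
  ring

lemma isUnit_det_smul_one_add_xiSigma {ξ a : ℂ} (h : a ^ 2 ≠ (‖ξ‖ : ℂ) ^ 2) :
    IsUnit (a • (1 : Matrix (Fin 2) (Fin 2) ℂ) + xiSigma ξ).det := by
  rw [det_smul_one_add_xiSigma]
  exact (sub_ne_zero.mpr h).isUnit

section elimination

variable {n R : Type*} [Fintype n] [DecidableEq n] [CommRing R]

lemma eq_neg_smul_inv_mul_mulVec_of_row_eq {a c E : R} {A B : Matrix n n R} {x y : n → R}
    (hM : IsUnit ((a - E) • (1 : Matrix n n R) + A).det)
    (h : (a • 1 + A) *ᵥ x + c • (B *ᵥ y) = E • x) :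
    x = (-c) • ((((a - E) • 1 + A)⁻¹ * B) *ᵥ y) := by
  have hrow : ((a - E) • 1 + A) *ᵥ x = (-c) • (B *ᵥ y) := by
    simp only [add_mulVec, smul_mulVec, one_mulVec] at h ⊢
    linear_combination (norm := module) h
  have := congrArg (((a - E) • 1 + A)⁻¹ *ᵥ ·) hrow
  simpa only [mulVec_mulVec, nonsing_inv_mul _ hM, one_mulVec, mulVec_smul] using this

lemma mulVec_schurComplement_eq_zero {A B C P Q : Matrix n n R} {c E : R} {x y z : n → R}
    (h : A *ᵥ y + c • (B *ᵥ z) + c • (C *ᵥ x) = E • y)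
    (hx : x = (-c) • ((P * B) *ᵥ y)) (hz : z = (-c) • ((Q * C) *ᵥ y)) :
    (A - E • 1 - c ^ 2 • (C * P * B + B * Q * C)) *ᵥ y = 0 := by
  subst hx hz
  simp only [mulVec_smul, mulVec_mulVec, sub_mulVec, add_mulVec, smul_mulVec, one_mulVec,
    Matrix.mul_assoc] at h ⊢
  linear_combination (norm := module) h

end elimination

lemma curry_Hrep_mulVec (n : ℕ) (ξ : ℂ) (m ε : ℝ) (ψ : Fin (2 * n + 1) × Fin 2 → ℂ)
    (j : Fin (2 * n + 1)) :
    Function.curry (Hrep n ξ m ε *ᵥ ψ) j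
      = ∑ j' : Fin (2 * n + 1),
          replicaBlock ξ m ε ((j : ℤ) - n) ((j' : ℤ) - n) *ᵥ Function.curry ψ j' := by
  ext i
  simp only [Hrep, mulVec, dotProduct, Fintype.sum_prod_type, Finset.sum_apply,
    Function.curry_apply]

section rows

variable (ξ : ℂ) (m ε : ℝ) (ψ : Fin (2 * 1 + 1) × Fin 2 → ℂ)

lemma curry_Hrep_one_mulVec_two :
    Function.curry (Hrep 1 ξ m ε *ᵥ ψ) 2
      = ((1 : ℂ) • 1 + xiSigma ξ) *ᵥ Function.curry ψ 2
        + (ε : ℂ) • (Bm m *ᵥ Function.curry ψ 1) := by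
  rw [curry_Hrep_mulVec, Fin.sum_univ_three]
  simp only [replicaBlock, Fin.isValue, Fin.val_zero, Fin.val_one, Fin.val_two, Nat.cast_zero,
    Nat.cast_one, Nat.cast_ofNat]
  norm_num only [if_true, if_false, zero_mulVec, zero_add, one_smul, smul_mulVec]
  abel

lemma curry_Hrep_one_mulVec_one :
    Function.curry (Hrep 1 ξ m ε *ᵥ ψ) 1
      = xiSigma ξ *ᵥ Function.curry ψ 1 + (ε : ℂ) • (Bm m *ᵥ Function.curry ψ 0)
        + (ε : ℂ) • ((Bm m)ᴴ *ᵥ Function.curry ψ 2) := by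
  rw [curry_Hrep_mulVec, Fin.sum_univ_three]
  simp only [replicaBlock, Fin.isValue, Fin.val_zero, Fin.val_one, Fin.val_two, Nat.cast_zero,
    Nat.cast_one, Nat.cast_ofNat]
  norm_num only [if_true, if_false, zero_smul, zero_add, smul_mulVec]
  abel

lemma curry_Hrep_one_mulVec_zero :
    Function.curry (Hrep 1 ξ m ε *ᵥ ψ) 0
      = ((-1 : ℂ) • 1 + xiSigma ξ) *ᵥ Function.curry ψ 0
        + (ε : ℂ) • ((Bm m)ᴴ *ᵥ Function.curry ψ 1) := by
  rw [curry_Hrep_mulVec, Fin.sum_univ_three]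
  simp only [replicaBlock, Fin.isValue, Fin.val_zero, Fin.val_one, Fin.val_two, Nat.cast_zero,
    Nat.cast_one, Nat.cast_ofNat]
  norm_num only [if_true, if_false, zero_mulVec, add_zero, smul_mulVec]

end rows

/-- elimination of the outer replicas at an eigenvalue: if
`Ĥ₁(ξ)ψ = Eψ` with `(1∓E)² ≠ |ξ|²`, then the outer components `ψ₁, ψ₋₁` are determined by
the central component `ψ₀`, which solves the reduced `2×2` eigenproblem; in particular
`ψ ≠ 0 → ψ₀ ≠ 0`. Here block index `2 ↔ k = 1`, `1 ↔ k = 0`, `0 ↔ k = -1`. -/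
theorem outer_replica_elimination (ξ : ℂ) (m ε : ℝ) (E : ℂ)
    (hE1 : (1 - E) ^ 2 ≠ ((‖ξ‖ : ℂ)) ^ 2)
    (hE2 : (1 + E) ^ 2 ≠ ((‖ξ‖ : ℂ)) ^ 2)
    (ψ : Fin (2 * 1 + 1) × Fin 2 → ℂ)
    (hψ : (Hrep 1 ξ m ε).mulVec ψ = E • ψ) :
    (fun i => ψ ((2 : Fin (2 * 1 + 1)), i))
        = (-(ε : ℂ)) • ((((1 - E) • (1 : Matrix (Fin 2) (Fin 2) ℂ) + xiSigma ξ)⁻¹ *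
            Bm m).mulVec (fun j => ψ ((1 : Fin (2 * 1 + 1)), j))) ∧
    (fun i => ψ ((0 : Fin (2 * 1 + 1)), i))
        = (-(ε : ℂ)) • ((((-1 - E) • (1 : Matrix (Fin 2) (Fin 2) ℂ) + xiSigma ξ)⁻¹ *
            (Bm m)ᴴ).mulVec (fun j => ψ ((1 : Fin (2 * 1 + 1)), j))) ∧
    (xiSigma ξ - E • (1 : Matrix (Fin 2) (Fin 2) ℂ) -
        ((ε : ℂ)) ^ 2 •
          ((Bm m)ᴴ * ((1 - E) • (1 : Matrix (Fin 2) (Fin 2) ℂ) + xiSigma ξ)⁻¹ * Bm m +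
            Bm m * ((-1 - E) • (1 : Matrix (Fin 2) (Fin 2) ℂ) + xiSigma ξ)⁻¹ * (Bm m)ᴴ)
      ).mulVec (fun j => ψ ((1 : Fin (2 * 1 + 1)), j)) = 0 ∧
    (ψ ≠ 0 → (fun j => ψ ((1 : Fin (2 * 1 + 1)), j)) ≠ 0) := by
  have hrow (j : Fin 3) : Function.curry (Hrep 1 ξ m ε *ᵥ ψ) j = E • Function.curry ψ j := by
    rw [hψ]; rfl
  have hE2' : (-1 - E) ^ 2 ≠ (‖ξ‖ : ℂ) ^ 2 := by rwa [show (-1 - E) ^ 2 = (1 + E) ^ 2 by ring]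
  have hupper := eq_neg_smul_inv_mul_mulVec_of_row_eq (isUnit_det_smul_one_add_xiSigma hE1)
    ((curry_Hrep_one_mulVec_two ξ m ε ψ).symm.trans (hrow 2))
  have hlower := eq_neg_smul_inv_mul_mulVec_of_row_eq (isUnit_det_smul_one_add_xiSigma hE2')
    ((curry_Hrep_one_mulVec_zero ξ m ε ψ).symm.trans (hrow 0))
  refine ⟨hupper, hlower, mulVec_schurComplement_eq_zero
    ((curry_Hrep_one_mulVec_one ξ m ε ψ).symm.trans (hrow 1)) hupper hlower, ?_⟩
  intro hne hcenter
  replace hcenter : Function.curry ψ 1 = 0 := hcenter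
  refine hne (Function.curry_injective (funext fun j => ?_))
  fin_cases j
  · exact hlower.trans (by rw [hcenter, mulVec_zero, smul_zero]; rfl)
  · exact hcenter
  · exact hupper.trans (by rw [hcenter, mulVec_zero, smul_zero]; rfl)
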